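/- If V is a positive random variable with Laplace transform ψ(t) = E[exp(-tV)], and U₁, ..., U_p are i.i.d. uniform on (0,1) independent of V, then each coordinate U'_i = ψ(-log(U_i)/V) is uniformly distributed on (0,1). -/

import Mathlib

open MeasureTheory ProbabilityTheory

/-!
Given `V = v`, the event `t ≤ -log U / V` is `U ≤ exp (-t v)`, of probability `exp (-t v)`;
averaging over `V`, the variable `X = -log U / V` has survival function `P(t ≤ X) = ψ t`.
A continuous, strictly decreasing survival function with `ψ 0 = 1` maps its own variable
to a uniform one (probability integral transform), so `ψ X` is uniform on `(0,1)`.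
-/

open Set Filter Topology

lemma volume_restrict_Ioo_zero_one_Iic (c : ℝ) :
    volume.restrict (Ioo (0 : ℝ) 1) (Iic c) = ENNReal.ofReal (min c 1) := by
  rw [Measure.restrict_apply measurableSet_Iic]
  rcases lt_or_ge c 1 with hc | hc
  · have : Iic c ∩ Ioo 0 1 = Ioc 0 c := by
      ext x; simp only [mem_inter_iff, mem_Iic, mem_Ioo, mem_Ioc]; grind
    rw [this, Real.volume_Ioc, sub_zero, min_eq_left hc.le]
  · rw [inter_eq_right.2 fun x hx => mem_Iic.2 (hx.2.le.trans hc), Real.volume_Ioo,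
      min_eq_right hc, sub_zero]

theorem ProbabilityTheory.IndepFun.measure_le_comp_eq_lintegral {α Ω : Type*}
    [MeasurableSpace α] [MeasurableSpace Ω] {μ : Measure Ω} [IsFiniteMeasure μ]
    {V : Ω → α} {W : Ω → ℝ} (hV : Measurable V) (hW : Measurable W)
    (hVW : IndepFun V W μ) (hWlaw : μ.map W = volume.restrict (Ioo 0 1))
    {h : α → ℝ} (hh : Measurable h) (hh1 : ∀ ω, h (V ω) ≤ 1) :
    μ {ω | W ω ≤ h (V ω)} = ∫⁻ ω, ENNReal.ofReal (h (V ω)) ∂μ := by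
  have hS : MeasurableSet {q : α × ℝ | q.2 ≤ h q.1} :=
    measurableSet_le measurable_snd (hh.comp measurable_fst)
  calc μ {ω | W ω ≤ h (V ω)} = (μ.map V).prod (μ.map W) {q | q.2 ≤ h q.1} := by
        rw [← (indepFun_iff_map_prod_eq_prod_map_map hV.aemeasurable hW.aemeasurable).1 hVW,
          Measure.map_apply (hV.prodMk hW) hS]
        rfl
    _ = ∫⁻ v, ENNReal.ofReal (min (h v) 1) ∂(μ.map V) := by
        rw [Measure.prod_apply hS, hWlaw]
        exact lintegral_congr fun v => volume_restrict_Ioo_zero_one_Iic (h v)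
    _ = ∫⁻ ω, ENNReal.ofReal (h (V ω)) ∂μ := by
        rw [lintegral_map (hh.min measurable_const).ennreal_ofReal hV]
        simp only [min_eq_left (hh1 _)]

section SurvivalFunction

variable {Ω : Type*} [MeasurableSpace Ω] {μ : Measure Ω} [IsProbabilityMeasure μ]
  {X : Ω → ℝ} {ψ : ℝ → ℝ}

lemma ae_nonneg_of_survival (hX : Measurable X) (h0 : ψ 0 = 1)
    (hsurv : ∀ t, 0 ≤ t → μ {ω | t ≤ X ω} = ENNReal.ofReal (ψ t)) :
    ∀ᵐ ω ∂μ, 0 ≤ X ω := by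
  rw [ae_iff_measure_eq (measurableSet_le measurable_const hX).nullMeasurableSet,
    hsurv 0 le_rfl, h0, ENNReal.ofReal_one, measure_univ]

lemma exists_lt_of_survival (hX : Measurable X)
    (hsurv : ∀ t, 0 ≤ t → μ {ω | t ≤ X ω} = ENNReal.ofReal (ψ t)) {a : ℝ}
    (ha : 0 < a) : ∃ T, 0 ≤ T ∧ ψ T < a := by
  have hempty : ⋂ t : ℝ, {ω | t ≤ X ω} = ∅ :=
    eq_empty_of_forall_notMem fun ω hω => by
      have h : X ω + 1 ≤ X ω := mem_iInter.1 hω (X ω + 1)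
      linarith
  have hlim : Tendsto (fun t : ℝ => μ {ω | t ≤ X ω}) atTop (𝓝 0) := by
    have := tendsto_measure_iInter_atTop (μ := μ) (s := fun t : ℝ => {ω | t ≤ X ω})
      (fun t => (measurableSet_le measurable_const hX).nullMeasurableSet)
      (fun s t hst ω hω => hst.trans hω) ⟨0, measure_ne_top _ _⟩
    rwa [hempty, measure_empty] at this
  obtain ⟨T, hT, hT0⟩ :=
    ((hlim.eventually (gt_mem_nhds (ENNReal.ofReal_pos.2 ha))).and
      (eventually_ge_atTop 0)).exists
  rw [hsurv T hT0] at hT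
  exact ⟨T, hT0, (ENNReal.ofReal_lt_ofReal_iff ha).1 hT⟩

lemma measure_comp_le_eq_of_survival (hX : Measurable X) (hcont : ContinuousOn ψ (Ici 0))
    (hanti : StrictAntiOn ψ (Ici 0)) (h0 : ψ 0 = 1)
    (hsurv : ∀ t, 0 ≤ t → μ {ω | t ≤ X ω} = ENNReal.ofReal (ψ t)) {a : ℝ}
    (ha0 : 0 < a) (ha1 : a < 1) : μ {ω | ψ (X ω) ≤ a} = ENNReal.ofReal a := by
  obtain ⟨T, hT0, hT⟩ := exists_lt_of_survival hX hsurv ha0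
  obtain ⟨t, ht, rfl⟩ : ∃ t ∈ Icc 0 T, ψ t = a :=
    intermediate_value_Icc' hT0 (hcont.mono fun x hx => hx.1) ⟨hT.le, h0 ▸ ha1.le⟩
  have hlevel : {ω | ψ (X ω) ≤ ψ t} =ᵐ[μ] {ω | t ≤ X ω} := by
    filter_upwards [ae_nonneg_of_survival hX h0 hsurv] with ω hω
    exact propext (hanti.le_iff_ge hω ht.1)
  rw [measure_congr hlevel, hsurv t ht.1]

theorem map_comp_eq_uniform_of_survival (hX : Measurable X) (hcont : ContinuousOn ψ (Ici 0))
    (hanti : StrictAntiOn ψ (Ici 0)) (h0 : ψ 0 = 1)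
    (hsurv : ∀ t, 0 ≤ t → μ {ω | t ≤ X ω} = ENNReal.ofReal (ψ t)) :
    μ.map (fun ω => ψ (X ω)) = volume.restrict (Ioo (0 : ℝ) 1) := by
  have hnonneg := ae_nonneg_of_survival hX h0 hsurv
  have hmeas : AEMeasurable (fun ω => ψ (X ω)) μ := by
    have hsupp : (μ.map X).restrict (Ici 0) = μ.map X :=
      Measure.restrict_eq_self_of_ae_mem
        ((ae_map_iff hX.aemeasurable measurableSet_Ici).2 hnonneg)
    exact (hsupp ▸ hcont.aemeasurable measurableSet_Ici).comp_aemeasurable hX.aemeasurable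
  have : IsProbabilityMeasure (μ.map fun ω => ψ (X ω)) := Measure.isProbabilityMeasure_map hmeas
  have : IsProbabilityMeasure (volume.restrict (Ioo (0 : ℝ) 1)) := ⟨by simp⟩
  refine Measure.ext_of_Iic _ _ fun a => ?_
  rw [Measure.map_apply_of_aemeasurable hmeas measurableSet_Iic,
    volume_restrict_Ioo_zero_one_Iic]
  rcases le_or_gt a 0 with ha0 | ha0
  · -- `{ψ ∘ X ≤ a}` lies in every level set `{ψ ∘ X ≤ δ}`, `0 < δ < 1`, of measure δ
    rw [ENNReal.ofReal_eq_zero.2 (min_le_of_left_le ha0)]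
    refine le_antisymm (ge_of_tendsto ((ENNReal.continuous_ofReal.tendsto' 0 0
      ENNReal.ofReal_zero).mono_left (nhdsWithin_le_nhds (s := Ioi 0))) ?_) bot_le
    filter_upwards [Ioo_mem_nhdsGT one_pos] with δ hδ
    calc μ ((fun ω => ψ (X ω)) ⁻¹' Iic a) ≤ μ {ω | ψ (X ω) ≤ δ} :=
          measure_mono fun ω hω => (mem_Iic.1 hω).trans (ha0.trans hδ.1.le)
      _ = ENNReal.ofReal δ := measure_comp_le_eq_of_survival hX hcont hanti h0 hsurv hδ.1 hδ.2
  rcases lt_or_ge a 1 with ha1 | ha1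
  · rw [min_eq_left ha1.le]
    exact measure_comp_le_eq_of_survival hX hcont hanti h0 hsurv ha0 ha1
  · rw [min_eq_right ha1, ENNReal.ofReal_one, ← measure_univ (μ := μ)]
    refine (ae_iff_measure_eq (hmeas.nullMeasurable measurableSet_Iic)).1 ?_
    filter_upwards [hnonneg] with ω hω
    exact (h0 ▸ hanti.antitoneOn self_mem_Ici hω hω).trans ha1

end SurvivalFunction

lemma le_neg_log_div_iff {t v w : ℝ} (hv : 0 < v) (hw : 0 < w) :
    t ≤ -Real.log w / v ↔ w ≤ Real.exp (-(t * v)) := by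
  rw [le_div_iff₀ hv, ← Real.log_le_iff_le_exp hw, le_neg]

lemma integrable_exp_neg_mul {Ω : Type*} [MeasurableSpace Ω] {μ : Measure Ω}
    [IsFiniteMeasure μ] {V : Ω → ℝ} (hV : Measurable V) (hV0 : ∀ ω, 0 ≤ V ω) {t : ℝ}
    (ht : 0 ≤ t) :
    Integrable (fun ω => Real.exp (-(t * V ω))) μ :=
  .of_bound (by fun_prop) 1 (.of_forall fun ω => by
    rw [Real.norm_of_nonneg (Real.exp_pos _).le, Real.exp_le_one_iff, neg_nonpos]
    exact mul_nonneg ht (hV0 ω))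

/-- Marshall–Olkin sampling: if `V > 0` has Laplace transform `ψ(t) = E[exp(-tV)]`
(continuous and strictly decreasing on `[0,∞)`), and `U₁, …, U_p` are i.i.d. uniform
on `(0,1)` and independent of `V`, then each coordinate `U'_i = ψ(-log(U_i)/V)` is
uniformly distributed on `(0,1)`. -/
theorem marshall_olkin_marginal_uniform
    {Ω : Type*} [MeasurableSpace Ω] (μ : Measure Ω) [IsProbabilityMeasure μ]
    {p : ℕ} (V : Ω → ℝ) (hVmeas : Measurable V) (hVpos : ∀ ω, 0 < V ω)
    (U : Fin p → Ω → ℝ) (hUmeas : ∀ i, Measurable (U i))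
    (hUlaw : ∀ i, Measure.map (U i) μ = volume.restrict (Set.Ioo (0 : ℝ) 1))
    (hindep : iIndepFun
      (fun o : Option (Fin p) => o.elim V U) μ)
    (ψ : ℝ → ℝ)
    (hψ : ∀ t : ℝ, 0 ≤ t → ψ t = ∫ ω, Real.exp (-(t * V ω)) ∂μ)
    (hψcont : ContinuousOn ψ (Set.Ici 0))
    (hψanti : StrictAntiOn ψ (Set.Ici 0)) :
    ∀ i, Measure.map (fun ω => ψ (-(Real.log (U i ω)) / V ω)) μ
      = volume.restrict (Set.Ioo (0 : ℝ) 1) := by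
  intro i
  have hUae : ∀ᵐ ω ∂μ, U i ω ∈ Ioo (0 : ℝ) 1 :=
    ae_of_ae_map (hUmeas i).aemeasurable ((hUlaw i).symm ▸ ae_restrict_mem measurableSet_Ioo)
  have hVU : IndepFun V (U i) μ := by
    simpa using hindep.indepFun (i := none) (j := some i) (by simp)
  refine map_comp_eq_uniform_of_survival (by fun_prop) hψcont hψanti (by simp [hψ 0 le_rfl])
    fun t ht => ?_
  have hlevel :
      {ω | t ≤ -Real.log (U i ω) / V ω} =ᵐ[μ] {ω | U i ω ≤ Real.exp (-(t * V ω))} := by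
    filter_upwards [hUae] with ω hω
    exact propext (le_neg_log_div_iff (hVpos ω) hω.1)
  rw [measure_congr hlevel,
    hVU.measure_le_comp_eq_lintegral hVmeas (hUmeas i) (hUlaw i)
      (h := fun v => Real.exp (-(t * v))) (by fun_prop)
      fun ω => Real.exp_le_one_iff.2 (neg_nonpos.2 (mul_nonneg ht (hVpos ω).le)),
    ← ofReal_integral_eq_lintegral_ofReal
      (integrable_exp_neg_mul hVmeas (fun ω => (hVpos ω).le) ht)
      (.of_forall fun ω => (Real.exp_pos _).le), hψ t ht]
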